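/- arXiv:2003.09681 — 2 statements merged into one kernel-verified Lean document; each statement's English description precedes it below -/
import Mathlib

section
/- Let K ⊆ ℝ^d be a compact set. If the normed space (C¹(K), ‖·‖_{C¹(K)}) is complete, then for every x ∈ K there exists C_x > 0 such that for all f ∈ C¹(K) and all y ∈ K with y ≠ x one has |f(y) − f(x)|/|y − x| ≤ C_x ‖f‖_{C¹(K)}. -/
open Set Filter Topology MeasureTheory
open scoped NNReal ENNReal

noncomputable section

/-- `df` is a (not necessarily unique) derivative of `f` on the set `K`:
at every `x ∈ K`, `(f y - f x - ⟪df x, y - x⟫)/‖y - x‖ → 0` as `y → x` within `K`. -/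
def IsDerivOn {d : ℕ} (K : Set (EuclideanSpace ℝ (Fin d)))
    (f : EuclideanSpace ℝ (Fin d) → ℝ)
    (df : EuclideanSpace ℝ (Fin d) → EuclideanSpace ℝ (Fin d)) : Prop :=
  ∀ x ∈ K, Filter.Tendsto
    (fun y => (f y - f x - (inner ℝ (df x) (y - x) : ℝ)) / ‖y - x‖)
    (𝓝[K \ {x}] x) (𝓝 0)

/-- Sup norm of a function on `K`. -/
def supNormOn {d : ℕ} {α : Type*} [Norm α] (K : Set (EuclideanSpace ℝ (Fin d)))
    (g : EuclideanSpace ℝ (Fin d) → α) : ℝ :=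
  sSup ((fun z => ‖g z‖) '' K)

/-- `f ∈ C¹(K)`: `f` admits a continuous derivative on `K`. -/
def MemC1 {d : ℕ} (K : Set (EuclideanSpace ℝ (Fin d)))
    (f : EuclideanSpace ℝ (Fin d) → ℝ) : Prop :=
  ∃ df, ContinuousOn df K ∧ IsDerivOn K f df

/-- The quotient norm `‖f‖_{C¹(K)} = ‖f‖_K + inf {‖df‖_K : df a continuous derivative of f}`. -/
def c1Norm {d : ℕ} (K : Set (EuclideanSpace ℝ (Fin d)))
    (f : EuclideanSpace ℝ (Fin d) → ℝ) : ℝ :=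
  supNormOn K f +
    sInf {r | ∃ df, ContinuousOn df K ∧ IsDerivOn K f df ∧ r = supNormOn K df}

/-- A sequence of functions that is Cauchy with respect to the `C¹(K)` norm. -/
def C1Cauchy {d : ℕ} (K : Set (EuclideanSpace ℝ (Fin d)))
    (f : ℕ → EuclideanSpace ℝ (Fin d) → ℝ) : Prop :=
  ∀ ε > (0:ℝ), ∃ N : ℕ, ∀ m ≥ N, ∀ n ≥ N, c1Norm K (f m - f n) < ε

/-- Completeness of `(C¹(K), ‖·‖_{C¹(K)})`: every Cauchy sequence of `C¹(K)` functions
converges in the `C¹(K)` norm to a `C¹(K)` function. -/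
def C1Complete {d : ℕ} (K : Set (EuclideanSpace ℝ (Fin d))) : Prop :=
  ∀ f : ℕ → EuclideanSpace ℝ (Fin d) → ℝ, (∀ n, MemC1 K (f n)) → C1Cauchy K f →
    ∃ g, MemC1 K g ∧ Filter.Tendsto (fun n => c1Norm K (f n - g)) Filter.atTop (𝓝 0)

/-!
The hypothesis says that `C¹(K)` is complete for the seminorm `c1Norm`. On it the difference
quotients `f ↦ (f y - f x) / ‖y - x‖`, `y ∈ K \ {x}`, are continuous linear functionals, and they are
bounded at each single `f`: near `x` because `f` is differentiable at `x`, away from `x` because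
`f` is bounded on `K`. The uniform boundedness principle turns this into a bound uniform in `f`.
-/

open TopologicalSpace (Compacts)

section SupNorm

variable {d : ℕ} {K : Set (EuclideanSpace ℝ (Fin d))} {α : Type*} [SeminormedAddCommGroup α]
  {g h : EuclideanSpace ℝ (Fin d) → α}

lemma supNormOn_nonneg (g : EuclideanSpace ℝ (Fin d) → α) : 0 ≤ supNormOn K g :=
  Real.sSup_nonneg <| by rintro _ ⟨z, -, rfl⟩; exact norm_nonneg _

lemma supNormOn_le {M : ℝ} (hM : 0 ≤ M) (hg : ∀ z ∈ K, ‖g z‖ ≤ M) : supNormOn K g ≤ M :=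
  Real.sSup_le (by rintro _ ⟨z, hz, rfl⟩; exact hg z hz) hM

lemma norm_le_supNormOn (hK : IsCompact K) (hg : ContinuousOn g K) {z} (hz : z ∈ K) :
    ‖g z‖ ≤ supNormOn K g :=
  le_csSup (hK.image_of_continuousOn hg.norm).bddAbove ⟨z, hz, rfl⟩

lemma supNormOn_zero : supNormOn K (0 : EuclideanSpace ℝ (Fin d) → α) = 0 :=
  le_antisymm (supNormOn_le le_rfl fun _ _ => by simp) (supNormOn_nonneg _)

lemma supNormOn_add_le (hK : IsCompact K) (hg : ContinuousOn g K) (hh : ContinuousOn h K) :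
    supNormOn K (g + h) ≤ supNormOn K g + supNormOn K h :=
  supNormOn_le (add_nonneg (supNormOn_nonneg g) (supNormOn_nonneg h)) fun _ hz =>
    (norm_add_le _ _).trans (add_le_add (norm_le_supNormOn hK hg hz) (norm_le_supNormOn hK hh hz))

lemma supNormOn_smul_le [NormedSpace ℝ α] (hK : IsCompact K) (hg : ContinuousOn g K) (c : ℝ) :
    supNormOn K (c • g) ≤ ‖c‖ * supNormOn K g :=
  supNormOn_le (by positivity [supNormOn_nonneg (K := K) g]) fun z hz => by
    rw [Pi.smul_apply, norm_smul]
    exact mul_le_mul_of_nonneg_left (norm_le_supNormOn hK hg hz) (norm_nonneg c)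

end SupNorm

section Derivative

variable {d : ℕ} {K : Set (EuclideanSpace ℝ (Fin d))} {f g : EuclideanSpace ℝ (Fin d) → ℝ}
  {df dg : EuclideanSpace ℝ (Fin d) → EuclideanSpace ℝ (Fin d)}

lemma isDerivOn_zero : IsDerivOn K 0 0 := fun _ _ => by simpa using tendsto_const_nhds

lemma IsDerivOn.add (hf : IsDerivOn K f df) (hg : IsDerivOn K g dg) :
    IsDerivOn K (f + g) (df + dg) := fun x hx => by
  simpa only [add_zero, ← add_div, Pi.add_apply, inner_add_left, add_sub_add_comm, sub_sub,
    add_comm, add_left_comm] using (hf x hx).add (hg x hx)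

lemma IsDerivOn.smul (c : ℝ) (hf : IsDerivOn K f df) : IsDerivOn K (c • f) (c • df) :=
  fun x hx => by
    simpa only [mul_zero, ← mul_div_assoc, mul_sub, Pi.smul_apply, smul_eq_mul,
      real_inner_smul_left] using (hf x hx).const_mul c

lemma IsDerivOn.eventually_abs_sub_le (hf : IsDerivOn K f df) {x} (hx : x ∈ K) :
    ∀ᶠ y in 𝓝[K \ {x}] x, |f y - f x| ≤ (‖df x‖ + 1) * ‖y - x‖ := by
  filter_upwards [(hf x hx).eventually (eventually_abs_sub_lt 0 one_pos), self_mem_nhdsWithin]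
    with y hy hyK
  have hyx : 0 < ‖y - x‖ := norm_pos_iff.2 (sub_ne_zero.2 hyK.2)
  rw [sub_zero, abs_div, abs_norm, div_lt_one hyx] at hy
  calc |f y - f x|
      ≤ |f y - f x - inner ℝ (df x) (y - x)| + |inner ℝ (df x) (y - x)| := by
        simpa using abs_add_le (f y - f x - inner ℝ (df x) (y - x)) (inner ℝ (df x) (y - x))
    _ ≤ ‖y - x‖ + ‖df x‖ * ‖y - x‖ := add_le_add hy.le (abs_real_inner_le_norm _ _)
    _ = (‖df x‖ + 1) * ‖y - x‖ := by ring

lemma IsDerivOn.continuousOn (hf : IsDerivOn K f df) : ContinuousOn f K := fun x hx => by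
  rw [← continuousWithinAt_sdiff_self, ContinuousWithinAt, tendsto_iff_norm_sub_tendsto_zero]
  refine squeeze_zero' (Eventually.of_forall fun _ => norm_nonneg _)
    (hf.eventually_abs_sub_le hx) ?_
  have hlim : Tendsto (fun y => (‖df x‖ + 1) * ‖y - x‖) (𝓝 x) (𝓝 0) :=
    (continuous_const.mul (continuous_id.sub continuous_const).norm).tendsto' x 0 (by simp)
  exact hlim.mono_left nhdsWithin_le_nhds

lemma MemC1.zero : MemC1 K 0 := ⟨0, continuousOn_const, isDerivOn_zero⟩

lemma MemC1.add (hf : MemC1 K f) (hg : MemC1 K g) : MemC1 K (f + g) :=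
  let ⟨df, hdf, hf⟩ := hf
  let ⟨dg, hdg, hg⟩ := hg
  ⟨df + dg, hdf.add hdg, hf.add hg⟩

lemma MemC1.smul (c : ℝ) (hf : MemC1 K f) : MemC1 K (c • f) :=
  let ⟨df, hdf, hf⟩ := hf
  ⟨c • df, hdf.const_smul c, hf.smul c⟩

lemma MemC1.continuousOn (hf : MemC1 K f) : ContinuousOn f K :=
  let ⟨_, _, hf⟩ := hf
  hf.continuousOn

lemma MemC1.exists_abs_sub_le_mul_norm (hK : IsCompact K) (hf : MemC1 K f) {x} (hx : x ∈ K) :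
    ∃ C, ∀ y ∈ K, |f y - f x| ≤ C * ‖y - x‖ := by
  obtain ⟨df, -, hder⟩ := hf
  obtain ⟨δ, hδ, hnear⟩ :=
    Metric.nhdsWithin_basis_ball.eventually_iff.1 (hder.eventually_abs_sub_le hx)
  obtain ⟨B, hB⟩ := hK.exists_bound_of_continuousOn hder.continuousOn
  simp only [Real.norm_eq_abs] at hB
  refine ⟨max (‖df x‖ + 1) (2 * B / δ), fun y hy => ?_⟩
  by_cases hyx : y = x
  · simp [hyx]
  by_cases hyδ : ‖y - x‖ < δ
  · refine (hnear ⟨?_, hy, hyx⟩).trans (by gcongr; exact le_max_left _ _)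
    rwa [Metric.mem_ball, dist_eq_norm]
  · have hB0 : 0 ≤ B := (abs_nonneg _).trans (hB x hx)
    calc |f y - f x| ≤ |f y| + |f x| := abs_sub _ _
      _ ≤ 2 * B / δ * δ := by
        rw [div_mul_cancel₀ _ hδ.ne']; linarith [hB y hy, hB x hx]
      _ ≤ max (‖df x‖ + 1) (2 * B / δ) * ‖y - x‖ := by
        gcongr
        · exact le_max_right _ _
        · exact not_lt.1 hyδ

end Derivative

section C1Norm

variable {d : ℕ} {K : Set (EuclideanSpace ℝ (Fin d))} {f g : EuclideanSpace ℝ (Fin d) → ℝ}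

def derivNorms (K : Set (EuclideanSpace ℝ (Fin d))) (f : EuclideanSpace ℝ (Fin d) → ℝ) :
    Set ℝ :=
  {r | ∃ df, ContinuousOn df K ∧ IsDerivOn K f df ∧ r = supNormOn K df}

lemma c1Norm_eq : c1Norm K f = supNormOn K f + sInf (derivNorms K f) := rfl

lemma bddBelow_derivNorms : BddBelow (derivNorms K f) :=
  ⟨0, by rintro _ ⟨df, -, -, rfl⟩; exact supNormOn_nonneg df⟩

lemma MemC1.nonempty_derivNorms (hf : MemC1 K f) : (derivNorms K f).Nonempty :=
  let ⟨df, hdf, hf⟩ := hf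
  ⟨_, df, hdf, hf, rfl⟩

lemma sInf_derivNorms_nonneg : 0 ≤ sInf (derivNorms K f) :=
  Real.sInf_nonneg <| by rintro _ ⟨df, -, -, rfl⟩; exact supNormOn_nonneg df

lemma sInf_derivNorms_le {df : EuclideanSpace ℝ (Fin d) → EuclideanSpace ℝ (Fin d)}
    (hdf : ContinuousOn df K) (hf : IsDerivOn K f df) :
    sInf (derivNorms K f) ≤ supNormOn K df :=
  csInf_le bddBelow_derivNorms ⟨df, hdf, hf, rfl⟩

lemma c1Norm_nonneg : 0 ≤ c1Norm K f :=
  add_nonneg (supNormOn_nonneg f) sInf_derivNorms_nonneg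

lemma abs_le_c1Norm (hK : IsCompact K) (hf : MemC1 K f) {z} (hz : z ∈ K) :
    |f z| ≤ c1Norm K f :=
  (norm_le_supNormOn hK hf.continuousOn hz).trans (le_add_of_nonneg_right sInf_derivNorms_nonneg)

lemma c1Norm_zero : c1Norm K 0 = 0 := by
  have hinf : sInf (derivNorms K 0) ≤ 0 :=
    (sInf_derivNorms_le continuousOn_const isDerivOn_zero).trans_eq supNormOn_zero
  rw [c1Norm_eq, supNormOn_zero, zero_add]
  exact le_antisymm hinf sInf_derivNorms_nonneg

lemma sInf_derivNorms_add_le (hK : IsCompact K) (hf : MemC1 K f) (hg : MemC1 K g) :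
    sInf (derivNorms K (f + g)) ≤ sInf (derivNorms K f) + sInf (derivNorms K g) := by
  rw [← csInf_add hf.nonempty_derivNorms bddBelow_derivNorms hg.nonempty_derivNorms
    bddBelow_derivNorms]
  refine le_csInf (hf.nonempty_derivNorms.add hg.nonempty_derivNorms) ?_
  rintro _ ⟨_, ⟨df, hdf, hf, rfl⟩, _, ⟨dg, hdg, hg, rfl⟩, rfl⟩
  exact (sInf_derivNorms_le (hdf.add hdg) (hf.add hg)).trans (supNormOn_add_le hK hdf hdg)

lemma sInf_derivNorms_smul_le (hK : IsCompact K) (hf : MemC1 K f) (c : ℝ) :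
    sInf (derivNorms K (c • f)) ≤ ‖c‖ * sInf (derivNorms K f) := by
  rw [← smul_eq_mul, ← Real.sInf_smul_of_nonneg (norm_nonneg c)]
  refine le_csInf hf.nonempty_derivNorms.smul_set ?_
  rintro _ ⟨_, ⟨df, hdf, hf, rfl⟩, rfl⟩
  exact (sInf_derivNorms_le (hdf.const_smul c) (hf.smul c)).trans (supNormOn_smul_le hK hdf c)

lemma c1Norm_add_le (hK : IsCompact K) (hf : MemC1 K f) (hg : MemC1 K g) :
    c1Norm K (f + g) ≤ c1Norm K f + c1Norm K g := by
  simp only [c1Norm_eq]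
  linarith [supNormOn_add_le hK hf.continuousOn hg.continuousOn, sInf_derivNorms_add_le hK hf hg]

lemma c1Norm_smul_le (hK : IsCompact K) (hf : MemC1 K f) (c : ℝ) :
    c1Norm K (c • f) ≤ ‖c‖ * c1Norm K f := by
  simp only [c1Norm_eq, mul_add]
  exact add_le_add (supNormOn_smul_le hK hf.continuousOn c) (sInf_derivNorms_smul_le hK hf c)

end C1Norm

def c1Submodule {d : ℕ} (K : Set (EuclideanSpace ℝ (Fin d))) :
    Submodule ℝ (EuclideanSpace ℝ (Fin d) → ℝ) where
  carrier := {f | MemC1 K f}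
  add_mem' := MemC1.add
  zero_mem' := MemC1.zero
  smul_mem' c _ hf := hf.smul c

/-- `C¹(K)` as a type of its own: it carries the `C¹(K)` seminorm instead of the topology of
pointwise convergence that `c1Submodule K` inherits from `EuclideanSpace ℝ (Fin d) → ℝ`. -/
def C1Space {d : ℕ} (K : Compacts (EuclideanSpace ℝ (Fin d))) : Type :=
  c1Submodule (K : Set (EuclideanSpace ℝ (Fin d)))

namespace C1Space

variable {d : ℕ} {K : Compacts (EuclideanSpace ℝ (Fin d))}

instance : AddCommGroup (C1Space K) :=
  inferInstanceAs (AddCommGroup (c1Submodule (K : Set (EuclideanSpace ℝ (Fin d)))))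

instance : Module ℝ (C1Space K) :=
  inferInstanceAs (Module ℝ (c1Submodule (K : Set (EuclideanSpace ℝ (Fin d)))))

instance : CoeFun (C1Space K) fun _ => EuclideanSpace ℝ (Fin d) → ℝ :=
  ⟨fun f => Subtype.val f⟩

lemma memC1 (f : C1Space K) : MemC1 K f := Subtype.property f

def c1Seminorm : Seminorm ℝ (C1Space K) :=
  Seminorm.ofSMulLE (fun f => c1Norm K f) c1Norm_zero
    (fun f g => c1Norm_add_le K.isCompact f.memC1 g.memC1)
    (fun c f => c1Norm_smul_le K.isCompact f.memC1 c)

instance : SeminormedAddCommGroup (C1Space K) :=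
  AddGroupSeminorm.toSeminormedAddCommGroup c1Seminorm.toAddGroupSeminorm

lemma norm_eq_c1Norm (f : C1Space K) : ‖f‖ = c1Norm K f := rfl

instance : NormedSpace ℝ (C1Space K) :=
  ⟨fun c f => (map_smul_eq_mul c1Seminorm c f).le⟩

lemma completeSpace (h : C1Complete (K : Set (EuclideanSpace ℝ (Fin d)))) :
    CompleteSpace (C1Space K) := by
  refine Metric.complete_of_cauchySeq_tendsto fun u hu => ?_
  obtain ⟨g, hg, hlim⟩ := h (fun n => u n) (fun n => (u n).memC1) fun ε hε =>
    (Metric.cauchySeq_iff.1 hu ε hε).imp fun _ hN m hm n hn =>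
      (dist_eq_norm (u m) (u n)).symm.trans_lt (hN m hm n hn)
  exact ⟨(⟨g, hg⟩ : c1Submodule _), tendsto_iff_norm_sub_tendsto_zero.2 hlim⟩

def evalCLM {z : EuclideanSpace ℝ (Fin d)} (hz : z ∈ K) : C1Space K →L[ℝ] ℝ :=
  LinearMap.mkContinuous
    { toFun := fun f => f z
      map_add' := fun _ _ => rfl
      map_smul' := fun _ _ => rfl } 1
    fun f => by
      rw [one_mul, norm_eq_c1Norm, Real.norm_eq_abs]
      exact abs_le_c1Norm K.isCompact f.memC1 hz

@[simp]
lemma evalCLM_apply {z : EuclideanSpace ℝ (Fin d)} (hz : z ∈ K) (f : C1Space K) :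
    evalCLM hz f = f z :=
  rfl

def slopeCLM {x y : EuclideanSpace ℝ (Fin d)} (hx : x ∈ K) (hy : y ∈ K) : C1Space K →L[ℝ] ℝ :=
  ‖y - x‖⁻¹ • (evalCLM hy - evalCLM hx)

lemma norm_slopeCLM_apply {x y : EuclideanSpace ℝ (Fin d)} (hx : x ∈ K) (hy : y ∈ K)
    (f : C1Space K) : ‖slopeCLM hx hy f‖ = ‖y - x‖⁻¹ * |f y - f x| := by
  rw [slopeCLM, smul_apply, sub_apply, evalCLM_apply,
    evalCLM_apply, smul_eq_mul, norm_mul, norm_inv, norm_norm, Real.norm_eq_abs]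

theorem exists_abs_sub_le [CompleteSpace (C1Space K)] {x : EuclideanSpace ℝ (Fin d)}
    (hx : x ∈ K) : ∃ C, ∀ f : C1Space K, ∀ y ∈ K, |f y - f x| ≤ C * ‖f‖ * ‖y - x‖ := by
  obtain ⟨C, hC⟩ := banach_steinhaus (g := fun y : K => slopeCLM hx y.2) fun f => by
    obtain ⟨C, hC⟩ := f.memC1.exists_abs_sub_le_mul_norm K.isCompact hx
    refine ⟨max C 0, fun y => ?_⟩
    rw [norm_slopeCLM_apply]
    rcases eq_or_ne (y : EuclideanSpace ℝ (Fin d)) x with hyx | hyx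
    · simp [hyx]
    · rw [inv_mul_le_iff₀ (norm_pos_iff.2 (sub_ne_zero.2 hyx)), mul_comm]
      exact (hC y y.2).trans (mul_le_mul_of_nonneg_right (le_max_left _ _) (norm_nonneg _))
  refine ⟨C, fun f y hy => ?_⟩
  rcases eq_or_ne y x with rfl | hyx
  · simp
  have hslope : ‖y - x‖⁻¹ * |f y - f x| ≤ C * ‖f‖ := by
    rw [← norm_slopeCLM_apply hx hy]
    exact (ContinuousLinearMap.le_opNorm _ f).trans (by gcongr; exact hC ⟨y, hy⟩)
  rwa [inv_mul_le_iff₀ (norm_pos_iff.2 (sub_ne_zero.2 hyx)), mul_comm] at hslope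

end C1Space

/-- If `(C¹(K), ‖·‖_{C¹(K)})` is complete, then for every `x ∈ K` there is `C_x > 0`
such that `|f y - f x| / ‖y - x‖ ≤ C_x ‖f‖_{C¹(K)}` for all `f ∈ C¹(K)` and `y ∈ K`,
`y ≠ x`. -/
theorem pointwise_bound_of_complete {d : ℕ}
    (K : Set (EuclideanSpace ℝ (Fin d))) (hK : IsCompact K)
    (hcompl : C1Complete K) :
    ∀ x ∈ K, ∃ C > (0:ℝ), ∀ f : EuclideanSpace ℝ (Fin d) → ℝ,
      MemC1 K f → ∀ y ∈ K, y ≠ x → |f y - f x| ≤ C * c1Norm K f * ‖y - x‖ := by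
  intro x hx
  let Kc : Compacts (EuclideanSpace ℝ (Fin d)) := ⟨K, hK⟩
  have := C1Space.completeSpace (K := Kc) hcompl
  obtain ⟨C, hC⟩ := C1Space.exists_abs_sub_le (K := Kc) hx
  refine ⟨max C 1, by positivity, fun f hf y hy _ => ?_⟩
  calc |f y - f x| ≤ C * c1Norm K f * ‖y - x‖ := hC ⟨f, hf⟩ y hy
    _ ≤ max C 1 * c1Norm K f * ‖y - x‖ := by
      gcongr
      · exact c1Norm_nonneg
      · exact le_max_left _ _
end
end

section
/- Let K ⊆ ℝ^d be a topologically regular compact set and assume that for every x ∈ ∂K there exist C_x > 0 and a neighbourhood V_x of x such that each y ∈ V_x ∩ K can be joined from x by a rectifiable path of length at most C_x|x−y| contained in int(K) ∪ {x, y}. Then C¹_int(K) = C¹(K); that is, for every f ∈ C¹_int(K), the continuous extension to K of the derivative of f on int(K) is a continuous derivative of f on all of K. -/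
open Set Filter Topology MeasureTheory
open scoped NNReal ENNReal

noncomputable section

/-!
At a boundary point `x`, the map `g = f - f'(x)` has derivative of norm at most `ε` on
`int K` near `x`, so a mean value inequality along the path from `x` to `y` bounds
`‖g y - g x‖` by `ε` times the length of the path, hence by `ε C ‖x - y‖`. The mean value
inequality along a rectifiable path is a continuous induction comparing the increment of
`g ∘ γ` with the arc-length function of `γ`; it is applied to the subpath between the last
visit of `x` and the next visit of `y`, whose interior lies in `int K`.
-/

theorem dist_le_sub_of_forall_frequently_dist_le_sub {X : Type*} [PseudoMetricSpace X]
    {h : ℝ → X} {v : ℝ → ℝ} {c d : ℝ} (hcd : c ≤ d) (hh : ContinuousOn h (Icc c d))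
    (hv : MonotoneOn v (Icc c d))
    (hloc : ∀ t ∈ Ico c d, ∃ᶠ s in 𝓝[>] t, dist (h s) (h t) ≤ v s - v t) :
    dist (h d) (h c) ≤ v d - v c := by
  set S := {t ∈ Icc c d | dist (h t) (h c) ≤ v t - v c}
  have hcS : c ∈ S := ⟨left_mem_Icc.2 hcd, by simp⟩
  have hbdd : BddAbove S := ⟨d, fun t ht => ht.1.2⟩
  have hT : sSup S ∈ Icc c d := ⟨le_csSup hbdd hcS, csSup_le ⟨c, hcS⟩ fun t ht => ht.1.2⟩
  -- `S` need not be closed, but it is closed from the left since `v` is monotone.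
  have hTS : sSup S ∈ S := by
    refine ⟨hT, ?_⟩
    have : (𝓝[S] sSup S).NeBot :=
      mem_closure_iff_nhdsWithin_neBot.1 (csSup_mem_closure ⟨c, hcS⟩ hbdd)
    have hcont : ContinuousWithinAt h S (sSup S) := (hh _ hT).mono fun t ht => ht.1
    refine le_of_tendsto (hcont.tendsto.dist tendsto_const_nhds) ?_
    filter_upwards [self_mem_nhdsWithin] with t ht
    linarith [ht.2, hv ht.1 hT (le_csSup hbdd ht)]
  rcases hT.2.eq_or_lt with hTd | hTd
  · exact hTd ▸ hTS.2
  obtain ⟨s, hs, hsT⟩ := ((hloc _ ⟨hT.1, hTd⟩).and_eventually (Ioc_mem_nhdsGT hTd)).exists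
  have hsS : s ∈ S :=
    ⟨⟨hT.1.trans hsT.1.le, hsT.2⟩, by linarith [dist_triangle (h s) (h (sSup S)) (h c), hTS.2]⟩
  exact absurd (le_csSup hbdd hsS) (not_le.2 hsT.1)

theorem dist_le_sub_of_forall_frequently_dist_le_sub_Ioo {X : Type*} [PseudoMetricSpace X]
    {h : ℝ → X} {v : ℝ → ℝ} {c d : ℝ} (hcd : c ≤ d) (hh : ContinuousOn h (Icc c d))
    (hv : MonotoneOn v (Icc c d))
    (hloc : ∀ t ∈ Ioo c d, ∃ᶠ s in 𝓝[>] t, dist (h s) (h t) ≤ v s - v t) :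
    dist (h d) (h c) ≤ v d - v c := by
  rcases hcd.eq_or_lt with rfl | hcd
  · simp
  have hc : c ∈ Icc c d := left_mem_Icc.2 hcd.le
  have hlim : Tendsto (fun c' => dist (h d) (h c')) (𝓝[>] c) (𝓝 (dist (h d) (h c))) :=
    tendsto_const_nhds.dist <|
      (hh c hc).tendsto.mono_left (nhdsWithin_le_of_mem (Icc_mem_nhdsGT hcd))
  refine le_of_tendsto hlim ?_
  filter_upwards [Ioo_mem_nhdsGT hcd] with c' hc'
  have hsub : Icc c' d ⊆ Icc c d := Icc_subset_Icc_left hc'.1.le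
  calc dist (h d) (h c') ≤ v d - v c' :=
        dist_le_sub_of_forall_frequently_dist_le_sub hc'.2.le (hh.mono hsub) (hv.mono hsub)
          fun t ht => hloc t ⟨hc'.1.trans_le ht.1, ht.2⟩
    _ ≤ v d - v c := by linarith [hv hc (hsub (left_mem_Icc.2 hc'.2.le)) hc'.1.le]

theorem variationOnFromTo.dist_le_sub_of_le {α E : Type*} [LinearOrder α] [PseudoMetricSpace E]
    {f : α → E} {s : Set α} (hf : LocallyBoundedVariationOn f s) {a b c : α}
    (as : a ∈ s) (bs : b ∈ s) (cs : c ∈ s) (bc : b ≤ c) :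
    dist (f c) (f b) ≤ variationOnFromTo f s a c - variationOnFromTo f s a b := by
  rw [← variationOnFromTo.add hf as bs cs, add_sub_cancel_left,
    variationOnFromTo.eq_of_le f s bc, dist_comm, dist_edist]
  exact ENNReal.toReal_mono (hf b c bs cs)
    (eVariationOn.edist_le f ⟨bs, le_rfl, bc⟩ ⟨cs, bc, le_rfl⟩)

theorem ContinuousOn.exists_subpath_avoiding_endpoints {X : Type*} [TopologicalSpace X]
    [T1Space X] {γ : ℝ → X} {a b : ℝ} (hab : a ≤ b) (hγ : ContinuousOn γ (Icc a b)) :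
    ∃ t₀ t₁, a ≤ t₀ ∧ t₀ ≤ t₁ ∧ t₁ ≤ b ∧ γ t₀ = γ a ∧ γ t₁ = γ b ∧
      ∀ t ∈ Ioo t₀ t₁, γ t ≠ γ a ∧ γ t ≠ γ b := by
  have hlevel : ∀ c, a ≤ c → ∀ x, IsCompact (Icc c b ∩ γ ⁻¹' {x}) := fun c hc x =>
    isCompact_Icc.of_isClosed_subset
      ((hγ.mono (Icc_subset_Icc_left hc)).preimage_isClosed_of_isClosed isClosed_Icc
        isClosed_singleton) inter_subset_left
  obtain ⟨t₀, ⟨ht₀, hγt₀⟩, hmax⟩ :=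
    (hlevel a le_rfl (γ a)).exists_isGreatest ⟨a, left_mem_Icc.2 hab, rfl⟩
  obtain ⟨t₁, ⟨ht₁, hγt₁⟩, hmin⟩ :=
    (hlevel t₀ ht₀.1 (γ b)).exists_isLeast ⟨b, right_mem_Icc.2 ht₀.2, rfl⟩
  refine ⟨t₀, t₁, ht₀.1, ht₁.1, ht₁.2, hγt₀, hγt₁, fun t ht => ⟨fun h => ?_, fun h => ?_⟩⟩
  · exact (hmax ⟨⟨ht₀.1.trans ht.1.le, ht.2.le.trans ht₁.2⟩, h⟩).not_gt ht.1
  · exact (hmin ⟨⟨ht.1.le, ht.2.le.trans ht₁.2⟩, h⟩).not_gt ht.2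

section

variable {E F : Type*} [NormedAddCommGroup E] [NormedSpace ℝ E] [NormedAddCommGroup F]
  [NormedSpace ℝ F] {K : Set E} {f : E → F} {f' : E → E →L[ℝ] F} {x : E}

theorem HasFDerivAt.eventually_norm_sub_le {g : E → F} {φ : E →L[ℝ] F} {z₀ : E}
    (hg : HasFDerivAt g φ z₀) {δ : ℝ} (hδ : 0 < δ) :
    ∀ᶠ z in 𝓝 z₀, ‖g z - g z₀‖ ≤ (‖φ‖ + δ) * ‖z - z₀‖ := by
  filter_upwards [hg.isLittleO.def hδ] with z hz
  calc ‖g z - g z₀‖ ≤ ‖g z - g z₀ - φ (z - z₀)‖ + ‖φ (z - z₀)‖ := norm_le_norm_sub_add _ _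
    _ ≤ δ * ‖z - z₀‖ + ‖φ‖ * ‖z - z₀‖ := add_le_add hz (φ.le_opNorm _)
    _ = (‖φ‖ + δ) * ‖z - z₀‖ := by ring

theorem BoundedVariationOn.norm_image_sub_le_of_norm_hasFDerivAt_le
    {g : E → F} {g' : E → E →L[ℝ] F} {U : Set E} {ε : ℝ}
    (hg : ∀ z ∈ U, HasFDerivAt g (g' z) z) (hg' : ∀ z ∈ U, ‖g' z‖ ≤ ε)
    {γ : ℝ → E} {a b : ℝ} (hab : a ≤ b) (hγ : BoundedVariationOn γ (Icc a b))
    (hγc : ContinuousOn γ (Ioo a b)) (hγU : MapsTo γ (Ioo a b) U)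
    (hgγ : ContinuousOn (g ∘ γ) (Icc a b)) :
    ‖g (γ b) - g (γ a)‖ ≤ ε * (eVariationOn γ (Icc a b)).toReal := by
  rcases hab.eq_or_lt with rfl | hab
  · simp
  obtain ⟨m, hm⟩ := nonempty_Ioo.2 hab
  have hε : 0 ≤ ε := (norm_nonneg _).trans (hg' _ (hγU hm))
  have ha : a ∈ Icc a b := left_mem_Icc.2 hab.le
  set V := variationOnFromTo γ (Icc a b) a
  have hVab : V b - V a = (eVariationOn γ (Icc a b)).toReal := by
    simp [V, variationOnFromTo.self, variationOnFromTo.eq_of_le _ _ hab.le]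
  have hV : MonotoneOn V (Icc a b) :=
    variationOnFromTo.monotoneOn hγ.locallyBoundedVariationOn ha
  have hbound : ∀ δ > 0, ‖g (γ b) - g (γ a)‖ ≤ (ε + δ) * (V b - V a) := by
    intro δ hδ
    rw [← dist_eq_norm, mul_sub]
    refine dist_le_sub_of_forall_frequently_dist_le_sub_Ioo (h := g ∘ γ) hab.le hgγ
      (fun _ hs _ ht hst => mul_le_mul_of_nonneg_left (hV hs ht hst) (by positivity))
      fun t ht => Eventually.frequently ?_
    have hγt : Tendsto γ (𝓝[>] t) (𝓝 (γ t)) :=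
      (hγc.continuousAt (Ioo_mem_nhds ht.1 ht.2)).tendsto.mono_left nhdsWithin_le_nhds
    filter_upwards [hγt.eventually ((hg _ (hγU ht)).eventually_norm_sub_le hδ),
      Ioo_mem_nhdsGT ht.2] with s hs hst
    rw [Function.comp_apply, Function.comp_apply, dist_eq_norm, ← mul_sub]
    calc ‖g (γ s) - g (γ t)‖ ≤ (‖g' (γ t)‖ + δ) * ‖γ s - γ t‖ := hs
      _ ≤ (ε + δ) * (V s - V t) := by
        rw [← dist_eq_norm]
        gcongr
        · exact hg' _ (hγU ht)
        · exact variationOnFromTo.dist_le_sub_of_le hγ.locallyBoundedVariationOn ha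
            (Ioo_subset_Icc_self ht) ⟨ht.1.le.trans hst.1.le, hst.2.le⟩ hst.1.le
  rw [← hVab]
  have hlim : Tendsto (fun δ => (ε + δ) * (V b - V a)) (𝓝[>] 0) (𝓝 (ε * (V b - V a))) := by
    simpa using ((tendsto_const_nhds.add tendsto_id).mul_const (V b - V a)).mono_left
      (nhdsWithin_le_nhds (a := (0 : ℝ)))
  exact ge_of_tendsto hlim (eventually_nhdsWithin_of_forall hbound)

theorem norm_sub_sub_le_of_path {y : E} {ε r : ℝ} (hf : ContinuousOn f K)
    (hdiff : ∀ z ∈ interior K, HasFDerivAt f (f' z) z)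
    (hf' : ∀ z ∈ K ∩ Metric.ball x r, ‖f' z - f' x‖ ≤ ε) (hx : x ∈ K) (hy : y ∈ K)
    {γ : ℝ → E} (hγ : ContinuousOn γ (Icc 0 1)) (hγ0 : γ 0 = x) (hγ1 : γ 1 = y)
    (hγK : ∀ t ∈ Icc (0 : ℝ) 1, γ t ∈ interior K ∪ {x, y})
    (hvar : eVariationOn γ (Icc 0 1) < ENNReal.ofReal r) :
    ‖f y - f x - f' x (y - x)‖ ≤ ε * (eVariationOn γ (Icc 0 1)).toReal := by
  have hBV : BoundedVariationOn γ (Icc 0 1) := (hvar.trans ENNReal.ofReal_lt_top).ne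
  have hr : 0 < r := ENNReal.ofReal_pos.1 (pos_of_gt hvar)
  have hε : 0 ≤ ε := (norm_nonneg _).trans (hf' x ⟨hx, Metric.mem_ball_self hr⟩)
  have hball : ∀ t ∈ Icc (0 : ℝ) 1, γ t ∈ Metric.ball x r := fun t ht => by
    rw [Metric.mem_ball, ← hγ0]
    exact (hBV.dist_le ht (left_mem_Icc.2 zero_le_one)).trans_lt
      (ENNReal.toReal_lt_of_lt_ofReal hvar)
  have hK : ∀ t ∈ Icc (0 : ℝ) 1, γ t ∈ K := fun t ht => by
    rcases hγK t ht with h | h | h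
    exacts [interior_subset h, h ▸ hx, h ▸ hy]
  obtain ⟨t₀, t₁, h0, ht₀₁, h1, hγt₀, hγt₁, havoid⟩ :=
    hγ.exists_subpath_avoiding_endpoints zero_le_one
  rw [hγ0] at hγt₀ havoid
  rw [hγ1] at hγt₁ havoid
  have hsub : Icc t₀ t₁ ⊆ Icc 0 1 := Icc_subset_Icc h0 h1
  have hinterior : MapsTo γ (Ioo t₀ t₁) (interior K ∩ Metric.ball x r) := fun t ht => by
    have ht' := hsub (Ioo_subset_Icc_self ht)
    refine ⟨?_, hball t ht'⟩
    rcases hγK t ht' with h | h | h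
    exacts [h, absurd h (havoid t ht).1, absurd h (havoid t ht).2]
  have hmvt := (hBV.mono hsub).norm_image_sub_le_of_norm_hasFDerivAt_le
    (g := fun z => f z - f' x z) (g' := fun z => f' z - f' x)
    (fun z hz => (hdiff z hz.1).sub (f' x).hasFDerivAt)
    (fun z hz => hf' z ⟨interior_subset hz.1, hz.2⟩) ht₀₁
    (hγ.mono (Ioo_subset_Icc_self.trans hsub)) hinterior
    ((hf.comp (hγ.mono hsub) fun t ht => hK t (hsub ht)).sub
      ((f' x).continuous.comp_continuousOn (hγ.mono hsub)))
  rw [hγt₀, hγt₁] at hmvt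
  calc ‖f y - f x - f' x (y - x)‖ = ‖f y - f' x y - (f x - f' x x)‖ := by
        congr 1; rw [map_sub]; abel
    _ ≤ ε * (eVariationOn γ (Icc t₀ t₁)).toReal := hmvt
    _ ≤ ε * (eVariationOn γ (Icc 0 1)).toReal := by
        gcongr
        exact eVariationOn.mono γ hsub

theorem isLittleO_of_forall_path_le {C : ℝ} {V : Set E} (hf : ContinuousOn f K)
    (hf' : ContinuousWithinAt f' K x) (hdiff : ∀ z ∈ interior K, HasFDerivAt f (f' z) z)
    (hx : x ∈ K) (hC : 0 ≤ C) (hV : V ∈ 𝓝 x)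
    (hpath : ∀ y ∈ V ∩ K, ∃ γ : ℝ → E, ContinuousOn γ (Icc 0 1) ∧
      γ 0 = x ∧ γ 1 = y ∧ (∀ t ∈ Icc (0 : ℝ) 1, γ t ∈ interior K ∪ {x, y}) ∧
      eVariationOn γ (Icc 0 1) ≤ ENNReal.ofReal (C * ‖x - y‖)) :
    (fun y => f y - f x - f' x (y - x)) =o[𝓝[K] x] (fun y => y - x) := by
  refine Asymptotics.isLittleO_iff.2 fun c hc => ?_
  set ε := c / (C + 1)
  have hε : 0 < ε := by positivity
  obtain ⟨r, hr, hrK⟩ := Metric.continuousWithinAt_iff.1 hf' ε hε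
  have hr' : 0 < r / (C + 1) := by positivity
  filter_upwards [self_mem_nhdsWithin, mem_nhdsWithin_of_mem_nhds hV,
    mem_nhdsWithin_of_mem_nhds (Metric.ball_mem_nhds x hr')] with y hyK hyV hyx
  obtain ⟨γ, hγ, hγ0, hγ1, hγK, hvar⟩ := hpath y ⟨hyV, hyK⟩
  rw [Metric.mem_ball, dist_eq_norm, lt_div_iff₀ (by positivity), ← norm_sub_rev] at hyx
  have hCr : C * ‖x - y‖ < r := by nlinarith [norm_nonneg (x - y)]
  calc ‖f y - f x - f' x (y - x)‖ ≤ ε * (eVariationOn γ (Icc 0 1)).toReal :=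
        norm_sub_sub_le_of_path hf hdiff
          (fun z hz => by rw [← dist_eq_norm]; exact (hrK hz.1 hz.2).le) hx hyK hγ hγ0 hγ1 hγK
          (hvar.trans_lt ((ENNReal.ofReal_lt_ofReal_iff hr).2 hCr))
    _ ≤ ε * (C * ‖x - y‖) := by
        gcongr
        exact ENNReal.toReal_le_of_le_ofReal (by positivity) hvar
    _ ≤ c * ‖y - x‖ := by
        rw [norm_sub_rev, ← mul_assoc]
        gcongr
        rw [div_mul_eq_mul_div, div_le_iff₀ (by positivity)]
        nlinarith

end

theorem isDerivOn_iff_isLittleO {d : ℕ} {K : Set (EuclideanSpace ℝ (Fin d))}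
    {f : EuclideanSpace ℝ (Fin d) → ℝ}
    {df : EuclideanSpace ℝ (Fin d) → EuclideanSpace ℝ (Fin d)} :
    IsDerivOn K f df ↔ ∀ x ∈ K,
      (fun y => f y - f x - inner ℝ (df x) (y - x)) =o[𝓝[K \ {x}] x] (fun y => y - x) := by
  refine forall₂_congr fun x _ => ?_
  rw [← Asymptotics.isLittleO_norm_right, Asymptotics.isLittleO_iff_tendsto']
  filter_upwards [self_mem_nhdsWithin] with y hy h
  exact absurd (norm_sub_eq_zero_iff.1 h) hy.2

theorem c1int_eq_c1_of_boundary_paths_general {d : ℕ}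
    (K : Set (EuclideanSpace ℝ (Fin d)))
    (hpath : ∀ x ∈ frontier K, ∃ C > (0:ℝ), ∃ V ∈ 𝓝 x, ∀ y ∈ V ∩ K,
      ∃ γ : ℝ → EuclideanSpace ℝ (Fin d), ContinuousOn γ (Icc 0 1) ∧
        γ 0 = x ∧ γ 1 = y ∧ (∀ t ∈ Icc (0:ℝ) 1, γ t ∈ interior K ∪ {x, y}) ∧
        eVariationOn γ (Icc 0 1) ≤ ENNReal.ofReal (C * ‖x - y‖)) :
    ∀ (f : EuclideanSpace ℝ (Fin d) → ℝ)
      (df : EuclideanSpace ℝ (Fin d) → EuclideanSpace ℝ (Fin d)),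
      ContinuousOn f K → ContinuousOn df K →
      (∀ x ∈ interior K, HasGradientAt f (df x) x) →
      IsDerivOn K f df := by
  intro f df hf hdf hdiff
  refine isDerivOn_iff_isLittleO.2 fun x hx => ?_
  let toDual := InnerProductSpace.toDual ℝ (EuclideanSpace ℝ (Fin d))
  have hfderiv : ∀ z ∈ interior K, HasFDerivAt f (toDual (df z) : _ →L[ℝ] ℝ) z :=
    fun z hz => (hdiff z hz).hasFDerivAt
  by_cases hxi : x ∈ interior K
  · exact (hfderiv x hxi).isLittleO.mono nhdsWithin_le_nhds
  obtain ⟨C, hC, V, hV, hpathx⟩ := hpath x ⟨subset_closure hx, hxi⟩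
  have hf' := toDual.continuous.continuousAt.comp_continuousWithinAt (hdf x hx)
  exact (isLittleO_of_forall_path_le hf hf' hfderiv hx hC.le hV hpathx).mono
    (nhdsWithin_mono _ sdiff_subset)

/-- If `K` is a topologically regular compact set such that every `x ∈ ∂K` has a
constant `C_x > 0` and a neighbourhood `V_x` with: each `y ∈ V_x ∩ K` is joined to `x`
by a rectifiable path of length at most `C_x ‖x - y‖` contained in `int(K) ∪ {x, y}`,
then `C¹_int(K) = C¹(K)`: the continuous extension of the interior derivative of any
`f ∈ C¹_int(K)` is a continuous derivative of `f` on all of `K`. -/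
theorem c1int_eq_c1_of_boundary_paths {d : ℕ}
    (K : Set (EuclideanSpace ℝ (Fin d))) (hK : IsCompact K)
    (hreg : K = closure (interior K))
    (hpath : ∀ x ∈ frontier K, ∃ C > (0:ℝ), ∃ V ∈ 𝓝 x, ∀ y ∈ V ∩ K,
      ∃ γ : ℝ → EuclideanSpace ℝ (Fin d), ContinuousOn γ (Icc 0 1) ∧
        γ 0 = x ∧ γ 1 = y ∧ (∀ t ∈ Icc (0:ℝ) 1, γ t ∈ interior K ∪ {x, y}) ∧
        eVariationOn γ (Icc 0 1) ≤ ENNReal.ofReal (C * ‖x - y‖)) :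
    ∀ (f : EuclideanSpace ℝ (Fin d) → ℝ)
      (df : EuclideanSpace ℝ (Fin d) → EuclideanSpace ℝ (Fin d)),
      ContinuousOn f K → ContinuousOn df K →
      (∀ x ∈ interior K, HasGradientAt f (df x) x) →
      IsDerivOn K f df :=
  c1int_eq_c1_of_boundary_paths_general K hpath
end
end
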